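/- arXiv:2601.00683 — 5 statements merged into one kernel-verified Lean document; each statement's English description precedes it below -/
import Mathlib

section
/- Let R be a commutative ring, E an n×n matrix over R, and I, J ⊆ {1,…,n} subsets with |I| = |J| = k ≥ 1. Then the k×k minor det( (adj E)_{I,J} ) of the adjugate matrix of E is divisible by (det E)^{k−1} in R. -/
/-!
Reindex so that `I` and `J` come first, and replace the columns of `adj E` outside `J` by
standard basis vectors. Multiplying by `E` turns that matrix into a block upper-triangular one
with diagonal blocks `det E • 1` (of size `k`) and a complementary submatrix of `E`, so
`det E * det (adj E)_{I,J}` is divisible by `(det E)^k`. For the generic matrix, whose determinant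
is a nonzero element of the domain `ℤ[X_ij]`, one factor `det E` cancels, and specialising the
variables gives the result over every commutative ring.
-/

/-- The `k×k` submatrix of `E` with rows indexed by `I` and columns by `J`
(both taken in increasing order). -/
noncomputable def Matrix.subMinorMatrix {R : Type*} [CommRing R] {n : ℕ}
    (E : Matrix (Fin n) (Fin n) R) (k : ℕ) (I J : Finset (Fin n))
    (hI : I.card = k) (hJ : J.card = k) : Matrix (Fin k) (Fin k) R :=
  E.submatrix (fun a => (I.orderIsoOfFin hI a : Fin n)) (fun a => (J.orderIsoOfFin hJ a : Fin n))

/-- The `(I,J)`-minor of `E`: the determinant of the submatrix of `E` with rows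
indexed by `I` and columns by `J`. -/
noncomputable def Matrix.subMinor {R : Type*} [CommRing R] {n : ℕ}
    (E : Matrix (Fin n) (Fin n) R) (k : ℕ) (I J : Finset (Fin n))
    (hI : I.card = k) (hJ : J.card = k) : R :=
  (E.subMinorMatrix k I J hI hJ).det

theorem exists_sumEquiv_comp_inl_eq {o m : Type*} [Fintype o] [Fintype m] {f g : m → o}
    (hf : Function.Injective f) (hg : Function.Injective g) :
    ∃ e₁ e₂ : m ⊕ ↥(Set.range f)ᶜ ≃ o, e₁ ∘ Sum.inl = f ∧ e₂ ∘ Sum.inl = g := by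
  classical
  have hcard : Fintype.card ↥(Set.range f)ᶜ = Fintype.card ↥(Set.range g)ᶜ := by
    simp only [Fintype.card_compl_set, Set.card_range_of_injective hf,
      Set.card_range_of_injective hg]
  exact ⟨((Equiv.ofInjective f hf).sumCongr (Equiv.refl _)).trans (Equiv.Set.sumCompl _),
    ((Equiv.ofInjective g hg).sumCongr (Fintype.equivOfCardEq hcard)).trans
      (Equiv.Set.sumCompl _), rfl, rfl⟩

namespace Matrix

variable {R : Type*} [CommRing R]

section Blocks

variable {m n : Type*} [Fintype m] [Fintype n] [DecidableEq m] [DecidableEq n]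

theorem det_mul_det_toBlocks₁₁_of_mul_eq_smul_one {M N : Matrix (m ⊕ n) (m ⊕ n) R} {d : R}
    (h : M * N = d • 1) :
    M.det * N.toBlocks₁₁.det = d ^ Fintype.card m * M.toBlocks₂₂.det := by
  rw [← M.fromBlocks_toBlocks, ← N.fromBlocks_toBlocks, fromBlocks_multiply, ← fromBlocks_one,
    fromBlocks_smul, fromBlocks_inj] at h
  obtain ⟨h₁₁, -, h₂₁, -⟩ := h
  have hmul : M * fromBlocks N.toBlocks₁₁ 0 N.toBlocks₂₁ 1 =
      fromBlocks (d • 1) M.toBlocks₁₂ 0 M.toBlocks₂₂ := by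
    conv_lhs => rw [← M.fromBlocks_toBlocks]
    rw [fromBlocks_multiply, h₁₁, h₂₁]
    simp only [smul_zero, Matrix.mul_zero, Matrix.mul_one, zero_add]
  simpa [det_fromBlocks_zero₁₂, det_fromBlocks_zero₂₁] using congrArg det hmul

end Blocks

variable {o : Type*} [Fintype o] [DecidableEq o]

theorem exists_isUnit_det_submatrix_equiv {m : Type*} [Fintype m] [DecidableEq m]
    (A : Matrix o o R) (e₁ e₂ : m ≃ o) :
    ∃ u : R, IsUnit u ∧ (A.submatrix e₁ e₂).det = u * A.det := by
  refine ⟨Equiv.Perm.sign (e₁.symm.trans e₂), (Units.isUnit _).map (Int.castRingHom R), ?_⟩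
  have hperm : A.submatrix e₁ e₂ = (A.submatrix id (e₁.symm.trans e₂)).submatrix e₁ e₁ := by
    ext; simp
  rw [hperm, det_submatrix_equiv_self, det_permute']

theorem det_pow_card_dvd_det_mul_det_adjugate_submatrix {m n : Type*} [Fintype m] [Fintype n]
    [DecidableEq m] [DecidableEq n] (E : Matrix o o R) (e₁ e₂ : m ⊕ n ≃ o) :
    E.det ^ Fintype.card m ∣
      E.det * (E.adjugate.submatrix (e₁ ∘ Sum.inl) (e₂ ∘ Sum.inl)).det := by
  have hmul : E.submatrix e₂ e₁ * E.adjugate.submatrix e₁ e₂ = E.det • 1 := by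
    rw [← submatrix_mul _ _ _ _ _ e₁.bijective, mul_adjugate]
    ext i j
    simp [one_apply]
  obtain ⟨u, hu, hdet⟩ := exists_isUnit_det_submatrix_equiv E e₂ e₁
  have hblocks := det_mul_det_toBlocks₁₁_of_mul_eq_smul_one hmul
  rw [hdet, mul_assoc] at hblocks
  exact hu.dvd_mul_left.mp (Dvd.intro _ hblocks.symm)

variable {m : Type*} [Fintype m] [DecidableEq m] {f g : m → o}

theorem det_pow_pred_card_dvd_det_adjugate_submatrix_of_det_ne_zero [IsDomain R]
    {E : Matrix o o R} (hE : E.det ≠ 0) (hf : Function.Injective f) (hg : Function.Injective g) :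
    E.det ^ (Fintype.card m - 1) ∣ (E.adjugate.submatrix f g).det := by
  obtain ⟨e₁, e₂, he₁, he₂⟩ := exists_sumEquiv_comp_inl_eq hf hg
  rw [← he₁, ← he₂]
  have hdvd := det_pow_card_dvd_det_mul_det_adjugate_submatrix E e₁ e₂
  rcases Nat.eq_zero_or_pos (Fintype.card m) with hm₀ | hm₀
  · simp [hm₀]
  rwa [← Nat.sub_add_cancel hm₀, pow_succ', mul_dvd_mul_iff_left hE] at hdvd

theorem det_pow_pred_card_dvd_det_adjugate_submatrix (E : Matrix o o R)
    (hf : Function.Injective f) (hg : Function.Injective g) :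
    E.det ^ (Fintype.card m - 1) ∣ (E.adjugate.submatrix f g).det := by
  let X := mvPolynomialX o o ℤ
  let φ := MvPolynomial.eval₂Hom (Int.castRingHom R) fun p : o × o => E p.1 p.2
  have hφ : φ.mapMatrix X = E := mvPolynomialX_map_eval₂ _ E
  have hsub : E.adjugate.submatrix f g = φ.mapMatrix (X.adjugate.submatrix f g) := by
    rw [← hφ, ← RingHom.map_adjugate]
    rfl
  rw [hsub, ← RingHom.map_det, ← hφ, ← RingHom.map_det, ← map_pow]
  exact map_dvd φ
    (det_pow_pred_card_dvd_det_adjugate_submatrix_of_det_ne_zero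
      (det_mvPolynomialX_ne_zero o ℤ) hf hg)

end Matrix

theorem jacobi_adjugate_minor_dvd_general {R : Type*} [CommRing R] {n k : ℕ}
    (E : Matrix (Fin n) (Fin n) R) (I J : Finset (Fin n))
    (hI : I.card = k) (hJ : J.card = k) :
    E.det ^ (k - 1) ∣ (E.adjugate).subMinor k I J hI hJ := by
  have h := E.det_pow_pred_card_dvd_det_adjugate_submatrix
    (Subtype.val_injective.comp (I.orderIsoOfFin hI).injective)
    (Subtype.val_injective.comp (J.orderIsoOfFin hJ).injective)
  rwa [Fintype.card_fin] at h

/-- **Jacobi's lemma (divisibility form).**  For an `n×n` matrix `E` over a commutative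
ring `R` and subsets `I, J ⊆ {1,…,n}` with `|I| = |J| = k ≥ 1`, the `k×k` minor
`det((adj E)_{I,J})` of the adjugate of `E` is divisible by `(det E)^(k-1)`. -/
theorem jacobi_adjugate_minor_dvd {R : Type*} [CommRing R] {n k : ℕ} (hk : 1 ≤ k)
    (E : Matrix (Fin n) (Fin n) R) (I J : Finset (Fin n))
    (hI : I.card = k) (hJ : J.card = k) :
    E.det ^ (k - 1) ∣ (E.adjugate).subMinor k I J hI hJ :=
  jacobi_adjugate_minor_dvd_general E I J hI hJ
end

section
/- Let R be a commutative ring, Λ the exterior algebra over R on generators X_1,…,X_n, and A an n×n matrix over R. Then for every k-element subset K ⊆ {1,…,n} (with products over K taken in increasing index order): ∏_{j∈K} ( Σ_{i=1}^n A_{j,i}·X_i ) = Σ_{I ⊆ {1,…,n}, |I| = k} det(A_{K,I})·X_I, where X_I = X_{i_1}⋯X_{i_k} for I = {i_1 < ⋯ < i_k}. -/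
open scoped BigOperators

noncomputable section

variable {R : Type*} [CommRing R] {n : ℕ}

/-- The generator `X_i` of the exterior algebra on `n` generators over `R`. -/
def Xgen (i : Fin n) : ExteriorAlgebra R (Fin n → R) :=
  ExteriorAlgebra.ι R (Pi.single i 1)

/-- `X_I`: the product of the generators `X_i` for `i ∈ I`, in increasing order. -/
def XIprod (I : Finset (Fin n)) : ExteriorAlgebra R (Fin n → R) :=
  ((I.sort (· ≤ ·)).map fun i => Xgen i).prod

/-!
The ordered product of the linear forms `∑ᵢ A j i • Xᵢ = ι (A j)` is the exterior product of the
rows of `A` indexed by `K`. Expand it in the basis `X_I` of `⋀^k Rⁿ`: the coordinate at `I` is the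
pairing of the coordinate forms indexed by `I` with those rows, i.e. the minor `det A_{K,I}`.
-/

theorem Finset.listMap_sort_eq_ofFn {α β : Type*} [LinearOrder α] (s : Finset α) {k : ℕ}
    (h : s.card = k) (f : α → β) :
    (s.sort (· ≤ ·)).map f = List.ofFn (f ∘ s.orderEmbOfFin h) := by
  rw [← s.listMap_orderEmbOfFin_finRange h, List.map_map, List.ofFn_eq_map]

namespace ExteriorAlgebra

variable {M : Type*} [AddCommGroup M] [Module R M]

theorem prod_map_sort_ι_eq_ιMulti {κ : Type*} [LinearOrder κ] (s : Finset κ) {k : ℕ}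
    (h : s.card = k) (v : κ → M) :
    ((s.sort (· ≤ ·)).map fun i => ι R (v i)).prod = ιMulti R k (v ∘ s.orderEmbOfFin h) := by
  rw [Finset.listMap_sort_eq_ofFn s h, ιMulti_apply]
  rfl

theorem ιMulti_eq_sum_det_smul_ιMulti_family {κ : Type*} [LinearOrder κ] [Fintype κ]
    (b : Module.Basis κ R M) {k : ℕ} (v : Fin k → M) :
    ιMulti R k v = ∑ s : Set.powersetCard κ k,
      (Matrix.of fun i j => b.coord (Set.powersetCard.ofFinEmbEquiv.symm s j) (v i)).det •
        ιMulti_family R k b s := by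
  have := congrArg Subtype.val ((b.exteriorPower k).sum_repr (exteriorPower.ιMulti R k v))
  simpa [exteriorPower.basis_repr_apply] using this.symm

end ExteriorAlgebra

theorem sum_smul_Xgen_eq_ι (x : Fin n → R) :
    ∑ i, x i • Xgen (R := R) i = ExteriorAlgebra.ι R x := by
  simp_rw [Xgen, ← map_smul, ← map_sum]
  congr 1
  simpa using (Pi.basisFun R (Fin n)).sum_repr x

theorem XIprod_eq_ιMulti_family {k : ℕ} (s : Set.powersetCard (Fin n) k) :
    XIprod (R := R) s.1 = ExteriorAlgebra.ιMulti_family R k (Pi.basisFun R (Fin n)) s := by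
  simp only [XIprod, Xgen, ← Pi.basisFun_apply]
  exact ExteriorAlgebra.prod_map_sort_ι_eq_ιMulti s.1 s.2 _

/-- In the exterior algebra `Λ` over `R` on generators `X_1, …, X_n`, for any `n×n` matrix
`A` over `R` and any `k`-element subset `K ⊆ {1,…,n}`, the ordered product over `j ∈ K` of
the linear combinations `∑_i A_{j,i}·X_i` equals `∑_{|I|=k} det(A_{K,I})·X_I`. -/
theorem prod_linear_combination_eq_sum_minor_smul
    (A : Matrix (Fin n) (Fin n) R) (K : Finset (Fin n)) :
    ((K.sort (· ≤ ·)).map fun j => ∑ i : Fin n, A j i • Xgen (R := R) i).prod =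
      ∑ I ∈ (Finset.univ.powersetCard K.card : Finset (Finset (Fin n))).attach,
        A.subMinor K.card K I.1 rfl (Finset.mem_powersetCard.mp I.2).2 • XIprod I.1 := by
  simp_rw [sum_smul_Xgen_eq_ι]
  rw [ExteriorAlgebra.prod_map_sort_ι_eq_ιMulti K rfl (fun j => A j),
    ExteriorAlgebra.ιMulti_eq_sum_det_smul_ιMulti_family (Pi.basisFun R (Fin n)),
    ← Finset.univ_eq_attach]
  refine Fintype.sum_equiv
    (Equiv.subtypeEquivRight fun s => by simp [Set.powersetCard.mem_iff]) _ _ fun s => ?_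
  -- the coefficients agree definitionally, `(Pi.basisFun R _).coord i` being evaluation at `i`
  congr 1
  exact (XIprod_eq_ιMulti_family s).symm

end
end

section
/- For every k ≥ 1 the following identity holds in B: s_k(Z_1,…,Z_k) = k·Σ_{i=1}^n t_i^{k−1}·u_i·v_i. Equivalently, writing p_m = m·Σ_{i=1}^n t_i^{m−1}·u_i·v_i, the elements Z_1, Z_2, … and p_1, p_2, … satisfy Newton's identities p_k = Σ_{i=1}^{k−1} (−1)^{i−1}·Z_i·p_{k−i} + (−1)^{k−1}·k·Z_k for all k ≥ 1. -/
open scoped BigOperators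

set_option synthInstance.maxHeartbeats 1000000
set_option maxHeartbeats 1000000

noncomputable section

variable (R : Type) [CommRing R] (n : ℕ)

/-- The polynomial ring `R[t_1, …, t_n]`. -/
abbrev Pn := MvPolynomial (Fin n) R

/-- `B`: the exterior algebra over `Pn` on the `2n` generators `u_1,…,u_n,v_1,…,v_n`. -/
abbrev Bn := ExteriorAlgebra (Pn R n) ((Fin n ⊕ Fin n) → Pn R n)

/-- The variable `t_i`. -/
def tv (i : Fin n) : Pn R n := MvPolynomial.X i

/-- The exterior generator `u_i`. -/
def uu (i : Fin n) : Bn R n := ExteriorAlgebra.ι (Pn R n) (Pi.single (Sum.inl i) 1)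

/-- The exterior generator `v_i`. -/
def vv (i : Fin n) : Bn R n := ExteriorAlgebra.ι (Pn R n) (Pi.single (Sum.inr i) 1)

/-- `X_l = ∑ t_i^(l-1) u_i` (indices `i` run over `Fin n`, `l ≥ 1`). -/
def Xel (l : ℕ) : Bn R n :=
  ∑ i : Fin n, algebraMap (Pn R n) (Bn R n) (tv R n i ^ (l - 1)) * uu R n i

/-- `Y_l = ∑ t_i^(l-1) v_i`. -/
def Yel (l : ℕ) : Bn R n :=
  ∑ i : Fin n, algebraMap (Pn R n) (Bn R n) (tv R n i ^ (l - 1)) * vv R n i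

/-- `X_I`, the product of the `X_{i+1}` for `i ∈ I`, in increasing order. -/
def XI (I : Finset (Fin n)) : Bn R n := ((I.sort (· ≤ ·)).map fun i => Xel R n (i.1 + 1)).prod

/-- `Y_I`, the product of the `Y_{i+1}` for `i ∈ I`, in increasing order. -/
def YI (I : Finset (Fin n)) : Bn R n := ((I.sort (· ≤ ·)).map fun i => Yel R n (i.1 + 1)).prod

/-- `(1 + p s)⁻¹ = ∑ (-p)^k s^k`, the inverse of `1 + p s` in `Pn[[s]]`. -/
def invOnePlus (p : Pn R n) : PowerSeries (Pn R n) := PowerSeries.mk fun k => (-p) ^ k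

/-- The `i`-th factor `1 + s u_i v_i (1 + t_i s)⁻¹` of the power series defining the `Z_l`. -/
def Zfactor (i : Fin n) : PowerSeries (Bn R n) :=
  1 + PowerSeries.C (uu R n i * vv R n i) *
    PowerSeries.map (algebraMap (Pn R n) (Bn R n)) (PowerSeries.X * invOnePlus R n (tv R n i))

/-- The power series `∏_{i=1}^n (1 + s u_i v_i (1 + t_i s)⁻¹) ∈ B[[s]]`. -/
def Zseries : PowerSeries (Bn R n) := ((List.finRange n).map (Zfactor R n)).prod

/-- `Z_l`, the coefficient of `s^l` in `Zseries`. -/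
def Zel (l : ℕ) : Bn R n := PowerSeries.coeff l (Zseries R n)

/-- The Vandermonde matrix `V = (t_j^(i-1))`. -/
def Vmat : Matrix (Fin n) (Fin n) (Pn R n) := Matrix.of fun i j => tv R n j ^ (i : ℕ)

/-- The Vandermonde determinant `Δ = det V = ∏_{i<j} (t_j - t_i)`. -/
def Dl : Pn R n := (Vmat R n).det


/-- The Newton polynomials, defined recursively by `s_1(x₁) = x₁` and
`s_k(x_1,…,x_k) = ∑_{i=1}^{k-1} (-1)^{i-1}·x_i·s_{k-i}(x_1,…,x_{k-i}) + (-1)^{k-1}·k·x_k`. -/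
def newtonPoly {A : Type*} [Ring A] (x : ℕ → A) : ℕ → A
  | 0 => 0
  | (k + 1) =>
      (∑ i ∈ Finset.range k, ((-1 : ℤ) ^ i) • (x (i + 1) * newtonPoly x (k - i))) +
        ((-1 : ℤ) ^ k) • ((k + 1 : ℕ) • x (k + 1))
  termination_by k => k
  decreasing_by omega

/-- `p_m = m·∑_{i=1}^n t_i^{m-1}·u_i·v_i ∈ B`. -/
def pB (n m : ℕ) : Bn ℤ n :=
  m • ∑ i : Fin n, algebraMap (Pn ℤ n) (Bn ℤ n) (tv ℤ n i ^ (m - 1)) * (uu ℤ n i * vv ℤ n i)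

/-!
Write `Z(s) = ∏ᵢ (1 + aᵢ gᵢ(s))` with `aᵢ = uᵢ vᵢ` and `gᵢ(s) = s (1 + tᵢ s)⁻¹`. Each `aᵢ` is
central with `aᵢ² = 0`, so `(1 + aᵢ gᵢ) · aᵢ gᵢ' = aᵢ gᵢ'`: the factor `1 + aᵢ gᵢ` has logarithmic
derivative `aᵢ gᵢ'`, and `s Z'(s) = Z(s) · Q(s)` with `Q(s) = ∑ᵢ aᵢ s gᵢ'(s) = ∑ₘ (-1)^(m-1) pₘ sᵐ`.
Comparing coefficients of `s^k` gives `k Z_k = ∑_{i<k} (-1)^(k-i-1) Z_i p_{k-i}`, which is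
Newton's identity, and the Newton polynomials are the unique solution of that recursion.
-/

open PowerSeries

section

variable {A : Type*} [Ring A]

/-- The operator `s · d/ds`; unlike `PowerSeries.derivative` it needs no commutativity. -/
def eulerDeriv (f : A⟦X⟧) : A⟦X⟧ :=
  mk fun k => k • coeff k f

@[simp]
lemma coeff_eulerDeriv (k : ℕ) (f : A⟦X⟧) : coeff k (eulerDeriv f) = k • coeff k f :=
  coeff_mk _ _

lemma eulerDeriv_one : eulerDeriv (1 : A⟦X⟧) = 0 := by
  ext (_ | k) <;> simp [coeff_one]

lemma eulerDeriv_add (f g : A⟦X⟧) : eulerDeriv (f + g) = eulerDeriv f + eulerDeriv g := by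
  ext k; simp

lemma eulerDeriv_C_mul (a : A) (f : A⟦X⟧) : eulerDeriv (C a * f) = C a * eulerDeriv f := by
  ext k
  rw [coeff_eulerDeriv, coeff_C_mul, coeff_C_mul, coeff_eulerDeriv, mul_smul_comm]

lemma eulerDeriv_mul (f g : A⟦X⟧) :
    eulerDeriv (f * g) = eulerDeriv f * g + f * eulerDeriv g := by
  ext k
  simp only [coeff_eulerDeriv, map_add, coeff_mul, Finset.smul_sum, ← Finset.sum_add_distrib]
  refine Finset.sum_congr rfl fun p hp => ?_
  rw [← Finset.HasAntidiagonal.mem_antidiagonal.mp hp, add_smul, smul_mul_assoc, mul_smul_comm]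

lemma PowerSeries.commute_of_forall_coeff_commute {g : A⟦X⟧}
    (hg : ∀ k b, Commute (coeff k g) b) (f : A⟦X⟧) : Commute f g := by
  ext k
  rw [coeff_mul, coeff_mul, ← Finset.Nat.sum_antidiagonal_swap]
  exact Finset.sum_congr rfl fun p _ => (hg p.1 _).symm

lemma eulerDeriv_list_prod {ι : Type*} (F G : ι → A⟦X⟧) (L : List ι)
    (hF : ∀ i ∈ L, eulerDeriv (F i) = F i * G i) (hG : ∀ i ∈ L, ∀ f, Commute (G i) f) :
    eulerDeriv (L.map F).prod = (L.map F).prod * (L.map G).sum := by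
  induction L with
  | nil => simp [eulerDeriv_one]
  | cons i L ih =>
    simp only [List.map_cons, List.prod_cons, List.sum_cons, List.forall_mem_cons] at *
    rw [eulerDeriv_mul, hF.1, ih hF.2 hG.2, mul_assoc, (hG.1 _).eq]
    simp only [mul_add, mul_assoc]

lemma eulerDeriv_one_add_C_mul {c : A} (hc : ∀ b, Commute c b) (hc2 : c * c = 0) (g : A⟦X⟧) :
    eulerDeriv (1 + C c * g) = (1 + C c * g) * (C c * eulerDeriv g) := by
  have hCg : Commute g (C c) :=
    commute_of_forall_coeff_commute (fun k b => by
      rw [coeff_C]; split_ifs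
      exacts [hc b, Commute.zero_left b]) g
  rw [eulerDeriv_add, eulerDeriv_one, eulerDeriv_C_mul, zero_add, add_mul, one_mul, mul_assoc,
    ← mul_assoc g, hCg.eq, ← mul_assoc, ← mul_assoc, ← map_mul, hc2, map_zero, zero_mul,
    zero_mul, add_zero]

lemma newton_of_eulerDeriv_eq_mul (E Q : A⟦X⟧) (p : ℕ → A) (hE : coeff 0 E = 1)
    (hQ0 : coeff 0 Q = 0) (hQ : ∀ m, coeff (m + 1) Q = (-1 : ℤ) ^ m • p (m + 1))
    (hD : eulerDeriv E = E * Q) (m : ℕ) :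
    p (m + 1) = (∑ j ∈ Finset.range m, (-1 : ℤ) ^ j • (coeff (j + 1) E * p (m - j))) +
      (-1 : ℤ) ^ m • ((m + 1) • coeff (m + 1) E) := by
  have hsign : ∀ j < m, (-1 : ℤ) ^ m * (-1) ^ (m - (j + 1)) = -(-1) ^ j := by
    intro j hj
    obtain ⟨d, rfl⟩ : ∃ d, m = d + (j + 1) := ⟨m - (j + 1), by omega⟩
    rw [Nat.add_sub_cancel, pow_add, mul_right_comm, ← pow_add, Even.neg_one_pow ⟨d, rfl⟩]
    ring
  -- The coefficient of `s^(m+1)` in `E' = E Q` is `(m+1) E_{m+1} = ∑_{i ≤ m} E_i Q_{m+1-i}`;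
  -- solve it for the `i = 0` term `Q_{m+1} = (-1)^m p_{m+1}`.
  have hcoeff := congrArg (coeff (m + 1)) hD
  rw [coeff_eulerDeriv, coeff_mul, Finset.Nat.sum_antidiagonal_eq_sum_range_succ_mk,
    Finset.sum_range_succ, Nat.sub_self, hQ0, mul_zero, add_zero, Finset.sum_range_succ', hE,
    one_mul] at hcoeff
  dsimp only at hcoeff
  rw [hcoeff, Nat.sub_zero, hQ, smul_add, smul_smul, ← pow_add, Even.neg_one_pow ⟨m, rfl⟩,
    one_smul, ← add_assoc, right_eq_add, Finset.smul_sum, ← Finset.sum_add_distrib]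
  refine Finset.sum_eq_zero fun j hj => ?_
  have hj : j < m := Finset.mem_range.mp hj
  rw [show m + 1 - (j + 1) = m - (j + 1) + 1 by omega, hQ, show m - (j + 1) + 1 = m - j by omega,
    mul_smul_comm, smul_smul, hsign j hj, neg_smul, add_neg_cancel]

lemma newtonPoly_eq_of_recurrence (x p : ℕ → A)
    (h : ∀ m, p (m + 1) = (∑ j ∈ Finset.range m, (-1 : ℤ) ^ j • (x (j + 1) * p (m - j))) +
      (-1 : ℤ) ^ m • ((m + 1) • x (m + 1))) (k : ℕ) (hk : 1 ≤ k) :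
    newtonPoly x k = p k := by
  induction k using Nat.strong_induction_on with
  | _ k ih =>
    obtain ⟨m, rfl⟩ : ∃ m, k = m + 1 := ⟨k - 1, by omega⟩
    rw [newtonPoly, h m]
    congr 1
    refine Finset.sum_congr rfl fun j hj => ?_
    rw [ih (m - j) (by omega) (Nat.sub_pos_of_lt (Finset.mem_range.mp hj))]

end

namespace ExteriorAlgebra

variable {S M : Type*} [CommRing S] [AddCommGroup M] [Module S M]

lemma commute_ι_mul_ι (x y : M) (b : ExteriorAlgebra S M) : Commute (ι S x * ι S y) b := by
  induction b using ExteriorAlgebra.induction with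
  | algebraMap r => exact (Algebra.commutes r _).symm
  | ι m =>
    have anticomm (z : M) : ι S z * ι S m = -(ι S m * ι S z) :=
      eq_neg_of_add_eq_zero_left (ι_add_mul_swap z m)
    rw [commute_iff_eq, mul_assoc, anticomm, mul_neg, ← mul_assoc, anticomm, neg_mul, neg_neg,
      mul_assoc]
  | mul a b ha hb => exact ha.mul_right hb
  | add a b ha hb => exact ha.add_right hb

lemma ι_mul_ι_mul_self (x y : M) : ι S x * ι S y * (ι S x * ι S y) = 0 := by
  rw [← mul_assoc, (commute_ι_mul_ι x y (ι S x)).eq, ← mul_assoc, ι_sq_zero, zero_mul, zero_mul]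

end ExteriorAlgebra

section Zseries

/-- `s (1 + t_i s)⁻¹`; `Zfactor R n i` is by definition `1 + C (u_i v_i) * sDivOnePlusT R n i`. -/
def sDivOnePlusT (i : Fin n) : (Bn R n)⟦X⟧ :=
  map (algebraMap (Pn R n) (Bn R n)) (X * invOnePlus R n (tv R n i))

lemma coeff_eulerDeriv_sDivOnePlusT (i : Fin n) (m : ℕ) :
    coeff (m + 1) (eulerDeriv (sDivOnePlusT R n i)) =
      (-1 : ℤ) ^ m • (m + 1) • algebraMap (Pn R n) (Bn R n) (tv R n i ^ m) := by
  have hsign : (-tv R n i) ^ m = (-1 : ℤ) ^ m • tv R n i ^ m := by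
    rw [neg_pow, zsmul_eq_mul]; push_cast; rfl
  rw [coeff_eulerDeriv, sDivOnePlusT, coeff_map, coeff_succ_X_mul, invOnePlus, coeff_mk, hsign,
    map_zsmul, smul_comm]

/-- `s Z'(s) / Z(s)`. -/
def Zlog : (Bn R n)⟦X⟧ :=
  ∑ i, C (uu R n i * vv R n i) * eulerDeriv (sDivOnePlusT R n i)

lemma eulerDeriv_Zseries : eulerDeriv (Zseries R n) = Zseries R n * Zlog R n := by
  rw [Zlog, Fin.sum_univ_def]
  refine eulerDeriv_list_prod _ _ _ (fun i _ => ?_) (fun i _ f => ?_)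
  · exact eulerDeriv_one_add_C_mul (ExteriorAlgebra.commute_ι_mul_ι _ _)
      (ExteriorAlgebra.ι_mul_ι_mul_self _ _) _
  · refine (commute_of_forall_coeff_commute (fun k b => ?_) f).symm
    rw [coeff_C_mul, coeff_eulerDeriv, sDivOnePlusT, coeff_map]
    exact (ExteriorAlgebra.commute_ι_mul_ι _ _ b).mul_left
      (Commute.smul_left (Algebra.commutes _ b) k)

lemma Zel_zero : Zel R n 0 = 1 := by
  rw [Zel, Zseries, coeff_zero_eq_constantCoeff_apply, map_list_prod, List.map_map]
  refine List.prod_eq_one fun x hx => ?_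
  obtain ⟨i, -, rfl⟩ := List.mem_map.mp hx
  simp [Zfactor]

lemma coeff_zero_Zlog : coeff 0 (Zlog R n) = 0 := by
  simp only [Zlog, map_sum, coeff_C_mul, coeff_eulerDeriv, zero_smul, mul_zero,
    Finset.sum_const_zero]

lemma coeff_succ_Zlog (m : ℕ) : coeff (m + 1) (Zlog ℤ n) = (-1 : ℤ) ^ m • pB n (m + 1) := by
  simp only [Zlog, map_sum, coeff_C_mul, coeff_eulerDeriv_sDivOnePlusT, pB, Finset.smul_sum]
  refine Finset.sum_congr rfl fun i _ => ?_
  rw [Nat.add_sub_cancel, mul_smul_comm, mul_smul_comm, Algebra.commutes]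

end Zseries

theorem newton_poly_Z_eq_general (n : ℕ) (k : ℕ) (hk : 1 ≤ k) :
    newtonPoly (fun m => Zel ℤ n m) k = pB n k ∧
      pB n k = (∑ j ∈ Finset.range (k - 1),
          ((-1 : ℤ) ^ j) • (Zel ℤ n (j + 1) * pB n (k - (j + 1)))) +
        ((-1 : ℤ) ^ (k - 1)) • (k • Zel ℤ n k) := by
  have newton := newton_of_eulerDeriv_eq_mul _ _ _ (Zel_zero ℤ n) (coeff_zero_Zlog ℤ n)
    (coeff_succ_Zlog n) (eulerDeriv_Zseries ℤ n)
  obtain ⟨m, rfl⟩ : ∃ m, k = m + 1 := ⟨k - 1, by omega⟩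
  exact ⟨newtonPoly_eq_of_recurrence _ _ newton _ hk, by simpa [Zel] using newton m⟩

/-- For every `k ≥ 1` one has `s_k(Z_1,…,Z_k) = k·∑_{i=1}^n t_i^{k-1}·u_i·v_i` in `B`;
equivalently, the `Z_l` and the `p_m = m·∑ t_i^{m-1} u_i v_i` satisfy Newton's identities
`p_k = ∑_{i=1}^{k-1} (-1)^{i-1}·Z_i·p_{k-i} + (-1)^{k-1}·k·Z_k`. -/
theorem newton_poly_Z_eq (n : ℕ) (hn : 1 ≤ n) (k : ℕ) (hk : 1 ≤ k) :
    newtonPoly (fun m => Zel ℤ n m) k = pB n k ∧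
      pB n k = (∑ j ∈ Finset.range (k - 1),
          ((-1 : ℤ) ^ j) • (Zel ℤ n (j + 1) * pB n (k - (j + 1)))) +
        ((-1 : ℤ) ^ (k - 1)) • (k • Zel ℤ n k) :=
  newton_poly_Z_eq_general n k hk

end
end

section
/- In the power series ring B[[s]], let E(s) = ∏_{i=1}^n (1 − t_i s), X(s) = Σ_{i=1}^n u_i·(1 − t_i s)^{−1}, Y(s) = Σ_{i=1}^n v_i·(1 − t_i s)^{−1}, and S(s) = Σ_{i=1}^n u_i v_i·(1 − t_i s)^{−2}. Then E(s)·( X(s)·Y(s) − S(s) ) is a polynomial in s of degree at most n − 2, i.e., its coefficient of s^l vanishes for every l ≥ n − 1. In particular (taking the coefficient of s^{n−1}), the identity Σ_{i=0}^{n−1} (−1)^{i+1}·e_i·( (n−i)·Σ_{k=1}^n t_k^{n−i−1}·u_k·v_k − Σ_{j=0}^{n−i−1} X_{n−i−j}·Y_{j+1} ) = 0 holds in B. -/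
open scoped BigOperators

set_option synthInstance.maxHeartbeats 1000000
set_option maxHeartbeats 1000000

noncomputable section

variable (R : Type) [CommRing R] (n : ℕ)

/-- `(1 - p s)⁻¹ = ∑ p^k s^k`, the inverse of `1 - p s` in `Pn[[s]]`. -/
def geomSeries (p : Pn R n) : PowerSeries (Pn R n) := PowerSeries.mk fun k => p ^ k

/-- `E(s) = ∏_{i=1}^n (1 - t_i s)`. -/
def Eseries : PowerSeries (Pn R n) :=
  ∏ i : Fin n, (1 - PowerSeries.C (tv R n i) * PowerSeries.X)

/-- `X(s) = ∑_{i=1}^n u_i (1 - t_i s)⁻¹ ∈ B[[s]]`. -/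
def Xseries : PowerSeries (Bn R n) :=
  ∑ i : Fin n, PowerSeries.C (uu R n i) *
    PowerSeries.map (algebraMap (Pn R n) (Bn R n)) (geomSeries R n (tv R n i))

/-- `Y(s) = ∑_{i=1}^n v_i (1 - t_i s)⁻¹ ∈ B[[s]]`. -/
def Yseries : PowerSeries (Bn R n) :=
  ∑ i : Fin n, PowerSeries.C (vv R n i) *
    PowerSeries.map (algebraMap (Pn R n) (Bn R n)) (geomSeries R n (tv R n i))

/-- `S(s) = ∑_{i=1}^n u_i v_i (1 - t_i s)⁻² ∈ B[[s]]`. -/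
def Sseries : PowerSeries (Bn R n) :=
  ∑ i : Fin n, PowerSeries.C (uu R n i * vv R n i) *
    PowerSeries.map (algebraMap (Pn R n) (Bn R n)) (geomSeries R n (tv R n i) ^ 2)

/-! Writing `gᵢ = (1 - tᵢ s)⁻¹`, the product `X(s) Y(s)` is `∑ᵢ ∑ⱼ uᵢ vⱼ gᵢ gⱼ`, and its diagonal
terms `uᵢ vᵢ gᵢ²` are exactly `S(s)`. Since the coefficients `tᵢ` are central in `B`, multiplying
an off-diagonal term by `E(s)` cancels the factors `1 - tᵢ s` and `1 - tⱼ s` against `gᵢ gⱼ`,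
leaving `uᵢ vⱼ ∏_{k ≠ i, j} (1 - t_k s)`, a polynomial of degree `n - 2`. The identity in `B` is
the coefficient of `s^{n-1}`, read off via `coeff E(s) = (-1)^i eᵢ` and
`coeff_m (X Y) = ∑ X_{m+1-j} Y_{j+1}`. -/

open Finset

namespace PowerSeries

section Algebra
variable {S A : Type*} [CommSemiring S] [Semiring A] [Algebra S A]

theorem commute_map_algebraMap (f : PowerSeries S) (g : PowerSeries A) :
    Commute (map (algebraMap S A) f) g := by
  ext k
  rw [coeff_mul, coeff_mul, ← Nat.sum_antidiagonal_swap]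
  refine sum_congr rfl fun p _ => ?_
  simp only [Prod.fst_swap, Prod.snd_swap, coeff_map]
  exact Algebra.commutes _ _

theorem C_mul_map_mul_C_mul_map (u v : A) (f g : PowerSeries S) :
    C u * map (algebraMap S A) f * (C v * map (algebraMap S A) g) =
      C (u * v) * map (algebraMap S A) (f * g) := by
  rw [map_mul, map_mul, mul_assoc, ← mul_assoc (map (algebraMap S A) f),
    (commute_map_algebraMap f (C v)).eq]
  simp only [mul_assoc]

theorem map_mul_C_mul_map (e f : PowerSeries S) (u : A) :
    map (algebraMap S A) e * (C u * map (algebraMap S A) f) =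
      C u * map (algebraMap S A) (e * f) := by
  rw [← mul_assoc, (commute_map_algebraMap e (C u)).eq, mul_assoc, map_mul]

end Algebra

theorem coeff_prod_one_sub_C_mul_X {S ι : Type*} [CommRing S] (s : Finset ι) (a : ι → S)
    (k : ℕ) :
    coeff k (∏ i ∈ s, (1 - C (a i) * X)) = (-1) ^ k * ∑ t ∈ s.powersetCard k, ∏ i ∈ t, a i := by
  have hfac : ∀ i, (1 : PowerSeries S) - C (a i) * X = 1 + C (-a i) * X := fun i => by
    rw [map_neg, neg_mul, sub_eq_add_neg]
  simp_rw [hfac, prod_one_add, prod_mul_distrib, prod_const, ← map_prod, map_sum,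
    coeff_C_mul_X_pow, sum_ite, sum_const_zero, add_zero, powersetCard_eq_filter, mul_sum]
  refine sum_congr (by simp only [eq_comm]) fun t ht => ?_
  rw [prod_neg, (mem_filter.1 ht).2]

theorem coeff_prod_one_sub_C_mul_X_eq_zero {S ι : Type*} [CommRing S] (s : Finset ι) (a : ι → S)
    {k : ℕ} (hk : s.card < k) : coeff k (∏ i ∈ s, (1 - C (a i) * X)) = 0 := by
  rw [coeff_prod_one_sub_C_mul_X, powersetCard_eq_empty.2 hk, sum_empty, mul_zero]

end PowerSeries

open PowerSeries

section

variable {R n}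

theorem geomSeries_eq_rescale (p : Pn R n) : geomSeries R n p = rescale p (mk 1) := by
  ext k
  simp [geomSeries, coeff_rescale]

theorem one_sub_C_mul_X_mul_geomSeries (p : Pn R n) : (1 - C p * X) * geomSeries R n p = 1 := by
  rw [geomSeries_eq_rescale, ← rescale_X, ← map_one (rescale p), ← map_sub, ← map_mul, mul_comm,
    mk_one_mul_one_sub_eq_one, map_one]

theorem coeff_geomSeries_sq (p : Pn R n) (m : ℕ) :
    coeff m (geomSeries R n p ^ 2) = (m + 1) • p ^ m := by
  rw [sq, coeff_mul]
  have hterm : ∀ q ∈ antidiagonal m, coeff q.1 (geomSeries R n p) * coeff q.2 (geomSeries R n p)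
      = p ^ m := fun q hq => by
    rw [geomSeries, coeff_mk, coeff_mk, ← pow_add, mem_antidiagonal.1 hq]
  rw [sum_congr rfl hterm, sum_const, Nat.card_antidiagonal]

theorem Eseries_mul_geomSeries_mul_geomSeries {i j : Fin n} (hji : j ≠ i) :
    Eseries R n * (geomSeries R n (tv R n i) * geomSeries R n (tv R n j)) =
      ∏ k ∈ (univ.erase i).erase j, (1 - C (tv R n k) * X) := by
  rw [Eseries, ← mul_prod_erase univ _ (mem_univ i),
    ← mul_prod_erase _ _ (mem_erase.2 ⟨hji, mem_univ j⟩)]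
  set rest := ∏ k ∈ (univ.erase i).erase j, (1 - C (tv R n k) * X)
  linear_combination
    ((1 - C (tv R n j) * X) * geomSeries R n (tv R n j) * rest) *
        one_sub_C_mul_X_mul_geomSeries (tv R n i) +
      rest * one_sub_C_mul_X_mul_geomSeries (tv R n j)

theorem Xseries_mul_Yseries_sub_Sseries :
    Xseries R n * Yseries R n - Sseries R n =
      ∑ i, ∑ j ∈ univ.erase i, C (uu R n i * vv R n j) *
        map (algebraMap (Pn R n) (Bn R n))
          (geomSeries R n (tv R n i) * geomSeries R n (tv R n j)) := by
  rw [Xseries, Yseries, Sseries, sum_mul_sum, ← sum_sub_distrib]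
  refine sum_congr rfl fun i _ => ?_
  simp_rw [C_mul_map_mul_C_mul_map]
  rw [← sum_erase_add _ _ (mem_univ i), sq, add_sub_cancel_right]

theorem map_Eseries_mul_Xseries_mul_Yseries_sub_Sseries :
    map (algebraMap (Pn R n) (Bn R n)) (Eseries R n) * (Xseries R n * Yseries R n - Sseries R n) =
      ∑ i, ∑ j ∈ univ.erase i, C (uu R n i * vv R n j) *
        map (algebraMap (Pn R n) (Bn R n))
          (∏ k ∈ (univ.erase i).erase j, (1 - C (tv R n k) * X)) := by
  rw [Xseries_mul_Yseries_sub_Sseries, mul_sum]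
  refine sum_congr rfl fun i _ => ?_
  rw [mul_sum]
  refine sum_congr rfl fun j hj => ?_
  rw [map_mul_C_mul_map, Eseries_mul_geomSeries_mul_geomSeries (ne_of_mem_erase hj)]

theorem coeff_map_Eseries_mul_Xseries_mul_Yseries_sub_Sseries_eq_zero {l : ℕ} (hl : n - 1 ≤ l) :
    coeff l (map (algebraMap (Pn R n) (Bn R n)) (Eseries R n) *
      (Xseries R n * Yseries R n - Sseries R n)) = 0 := by
  rw [map_Eseries_mul_Xseries_mul_Yseries_sub_Sseries, map_sum]
  refine sum_eq_zero fun i _ => ?_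
  rw [map_sum]
  refine sum_eq_zero fun j hj => ?_
  have hcard : ((univ.erase i).erase j).card < l := by
    have hlt := card_erase_lt_of_mem hj
    rw [card_erase_of_mem (mem_univ i), card_univ, Fintype.card_fin] at hlt
    omega
  rw [coeff_C_mul, coeff_map, coeff_prod_one_sub_C_mul_X_eq_zero _ _ hcard, map_zero, mul_zero]

theorem coeff_Eseries (k : ℕ) :
    coeff k (Eseries R n) = (-1) ^ k * MvPolynomial.esymm (Fin n) R k := by
  rw [Eseries, coeff_prod_one_sub_C_mul_X]
  rfl

theorem coeff_Xseries (k : ℕ) : coeff k (Xseries R n) = Xel R n (k + 1) := by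
  rw [Xseries, map_sum, Xel]
  refine sum_congr rfl fun i _ => ?_
  rw [coeff_C_mul, coeff_map, geomSeries, coeff_mk, Nat.add_sub_cancel]
  exact (Algebra.commutes _ _).symm

theorem coeff_Yseries (k : ℕ) : coeff k (Yseries R n) = Yel R n (k + 1) := by
  rw [Yseries, map_sum, Yel]
  refine sum_congr rfl fun i _ => ?_
  rw [coeff_C_mul, coeff_map, geomSeries, coeff_mk, Nat.add_sub_cancel]
  exact (Algebra.commutes _ _).symm

theorem coeff_Xseries_mul_Yseries (m : ℕ) :
    coeff m (Xseries R n * Yseries R n) =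
      ∑ j ∈ range (m + 1), Xel R n (m + 1 - j) * Yel R n (j + 1) := by
  rw [coeff_mul, ← Nat.sum_antidiagonal_swap]
  simp only [Prod.fst_swap, Prod.snd_swap]
  rw [Nat.sum_antidiagonal_eq_sum_range_succ fun a b =>
    coeff b (Xseries R n) * coeff a (Yseries R n)]
  refine sum_congr rfl fun j hj => ?_
  rw [coeff_Xseries, coeff_Yseries, Nat.sub_add_comm (Nat.lt_succ_iff.1 (mem_range.1 hj))]

theorem coeff_Sseries (m : ℕ) :
    coeff m (Sseries R n) =
      (m + 1) • ∑ k, algebraMap (Pn R n) (Bn R n) (tv R n k ^ m) * (uu R n k * vv R n k) := by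
  rw [Sseries, map_sum, smul_sum]
  refine sum_congr rfl fun i _ => ?_
  rw [coeff_C_mul, coeff_map, coeff_geomSeries_sq, map_nsmul, mul_smul_comm, ← Algebra.commutes]

end

theorem Eseries_mul_XY_sub_S_degree_le_general (n : ℕ) :
    (∀ l, n - 1 ≤ l →
      PowerSeries.coeff l
        (PowerSeries.map (algebraMap (Pn ℤ n) (Bn ℤ n)) (Eseries ℤ n) *
          (Xseries ℤ n * Yseries ℤ n - Sseries ℤ n)) = 0) ∧
    ∑ i ∈ Finset.range n, ((-1 : Bn ℤ n) ^ (i + 1)) *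
      (algebraMap (Pn ℤ n) (Bn ℤ n) (MvPolynomial.esymm (Fin n) ℤ i) *
        ((n - i) • (∑ k : Fin n,
            algebraMap (Pn ℤ n) (Bn ℤ n) (tv ℤ n k ^ (n - i - 1)) * (uu ℤ n k * vv ℤ n k)) -
          ∑ j ∈ Finset.range (n - i), Xel ℤ n (n - i - j) * Yel ℤ n (j + 1))) = 0 := by
  refine ⟨fun l hl => coeff_map_Eseries_mul_Xseries_mul_Yseries_sub_Sseries_eq_zero hl, ?_⟩
  rcases Nat.eq_zero_or_pos n with rfl | hn
  · simp
  have h :=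
    coeff_map_Eseries_mul_Xseries_mul_Yseries_sub_Sseries_eq_zero (R := ℤ) (le_refl (n - 1))
  rw [coeff_mul, Nat.sum_antidiagonal_eq_sum_range_succ fun a b => coeff a _ * coeff b _,
    Nat.succ_eq_add_one, Nat.sub_add_cancel hn] at h
  rw [← h]
  refine sum_congr rfl fun i hi => ?_
  have hi' : n - 1 - i + 1 = n - i := by have := mem_range.1 hi; omega
  rw [coeff_map, coeff_Eseries, map_sub, coeff_Xseries_mul_Yseries, coeff_Sseries, hi',
    Nat.sub_right_comm n 1 i]
  simp only [map_mul, map_pow, map_neg, map_one]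
  rw [pow_succ, mul_neg_one, neg_mul, ← mul_neg, ← mul_neg, neg_sub, mul_assoc]

/-- `E(s)·(X(s)·Y(s) − S(s))` is a polynomial in `s` of degree at most `n − 2`:
its coefficient of `s^l` vanishes for all `l ≥ n − 1`.  In particular, taking the
coefficient of `s^{n-1}` gives
`∑_{i=0}^{n-1} (-1)^{i+1} e_i·((n-i)·∑_k t_k^{n-i-1} u_k v_k − ∑_{j=0}^{n-i-1} X_{n-i-j}·Y_{j+1}) = 0`
in `B`. -/
theorem Eseries_mul_XY_sub_S_degree_le (n : ℕ) (hn : 1 ≤ n) :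
    (∀ l, n - 1 ≤ l →
      PowerSeries.coeff l
        (PowerSeries.map (algebraMap (Pn ℤ n) (Bn ℤ n)) (Eseries ℤ n) *
          (Xseries ℤ n * Yseries ℤ n - Sseries ℤ n)) = 0) ∧
    ∑ i ∈ Finset.range n, ((-1 : Bn ℤ n) ^ (i + 1)) *
      (algebraMap (Pn ℤ n) (Bn ℤ n) (MvPolynomial.esymm (Fin n) ℤ i) *
        ((n - i) • (∑ k : Fin n,
            algebraMap (Pn ℤ n) (Bn ℤ n) (tv ℤ n k ^ (n - i - 1)) * (uu ℤ n k * vv ℤ n k)) -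
          ∑ j ∈ Finset.range (n - i), Xel ℤ n (n - i - j) * Yel ℤ n (j + 1))) = 0 :=
  Eseries_mul_XY_sub_S_degree_le_general n

end
end

section
/- Let R be a commutative ring and ε_1,…,ε_n ∈ R elements with ε_i² = 0 for all i. For k ≥ 0 set Z̄_k = e_k(ε_1,…,ε_n), the k-th elementary symmetric polynomial evaluated at ε_1,…,ε_n (so Z̄_0 = 1 and Z̄_k = 0 for k > n). Then for all i, j ≥ 0: Z̄_i·Z̄_j = binom(i+j, i)·Z̄_{i+j}; in particular Z̄_i·Z̄_j = 0 whenever i + j > n. (Thus the Z̄_k satisfy the divided power relations.) -/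
namespace Finset

variable {ι : Type*} [DecidableEq ι]

theorem prod_mul_prod_eq_ite_disjoint {R : Type*} [CommMonoidWithZero R] {f : ι → R}
    (hf : ∀ x, f x ^ 2 = 0) (I J : Finset ι) :
    (∏ x ∈ I, f x) * ∏ x ∈ J, f x = if Disjoint I J then ∏ x ∈ I ∪ J, f x else 0 := by
  split_ifs with hIJ
  · exact (prod_union hIJ).symm
  · obtain ⟨x, hxI, hxJ⟩ := not_disjoint_iff.mp hIJ
    rw [← mul_prod_erase I f hxI, ← mul_prod_erase J f hxJ, mul_mul_mul_comm, ← sq, hf,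
      zero_mul]

/-- A `(i + j)`-subset `K` of `s` arises as `I ∪ J` from exactly `(i + j).choose i` disjoint
pairs `(I, J)` of an `i`-subset and a `j`-subset, namely `(I, K \ I)` for `I` an `i`-subset
of `K`. -/
theorem sum_disjoint_pairs_powersetCard {M : Type*} [AddCommMonoid M] (s : Finset ι)
    (i j : ℕ) (g : Finset ι → M) :
    ∑ p ∈ (s.powersetCard i ×ˢ s.powersetCard j).filter (fun p ↦ Disjoint p.1 p.2),
        g (p.1 ∪ p.2) =
      (i + j).choose i • ∑ K ∈ s.powersetCard (i + j), g K := by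
  calc
    _ = ∑ q ∈ (s.powersetCard (i + j)).sigma (powersetCard i), g q.1 := by
      refine sum_nbij' (fun p ↦ ⟨p.1 ∪ p.2, p.1⟩) (fun q ↦ (q.2, q.1 \ q.2)) ?_ ?_ ?_ ?_
        (fun _ _ ↦ rfl)
      · rintro ⟨I, J⟩ hIJ
        simp only [mem_filter, mem_product, mem_powersetCard] at hIJ
        obtain ⟨⟨⟨hIs, hI⟩, hJs, hJ⟩, hdisj⟩ := hIJ
        simp only [mem_sigma, mem_powersetCard]
        exact ⟨⟨union_subset hIs hJs, by rw [card_union_of_disjoint hdisj, hI, hJ]⟩,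
          subset_union_left, hI⟩
      · rintro ⟨K, I⟩ hKI
        simp only [mem_sigma, mem_powersetCard] at hKI
        obtain ⟨⟨hKs, hK⟩, hIK, hI⟩ := hKI
        simp only [mem_filter, mem_product, mem_powersetCard]
        refine ⟨⟨⟨hIK.trans hKs, hI⟩, sdiff_subset.trans hKs, ?_⟩, disjoint_sdiff⟩
        rw [card_sdiff_of_subset hIK, hK, hI, Nat.add_sub_cancel_left]
      · rintro ⟨I, J⟩ hIJ
        simp only [mem_filter] at hIJ
        simp [union_sdiff_cancel_left hIJ.2]
      · rintro ⟨K, I⟩ hKI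
        simp only [mem_sigma, mem_powersetCard] at hKI
        simp [union_sdiff_of_subset hKI.2.1]
    _ = ∑ K ∈ s.powersetCard (i + j), (i + j).choose i • g K := by
      rw [sum_sigma]
      dsimp only
      refine sum_congr rfl fun K hK ↦ ?_
      rw [sum_const, card_powersetCard, (mem_powersetCard.mp hK).2]
    _ = _ := (smul_sum ..).symm

theorem sum_prod_powersetCard_mul_sum_prod_powersetCard {R : Type*} [CommSemiring R]
    {f : ι → R} (hf : ∀ x, f x ^ 2 = 0) (s : Finset ι) (i j : ℕ) :
    (∑ I ∈ s.powersetCard i, ∏ x ∈ I, f x) * ∑ J ∈ s.powersetCard j, ∏ x ∈ J, f x =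
      (i + j).choose i * ∑ K ∈ s.powersetCard (i + j), ∏ x ∈ K, f x := by
  rw [sum_mul_sum, ← sum_product', ← nsmul_eq_mul,
    ← sum_disjoint_pairs_powersetCard s i j (fun K ↦ ∏ x ∈ K, f x), sum_filter]
  exact sum_congr rfl fun p _ ↦ prod_mul_prod_eq_ite_disjoint hf p.1 p.2

end Finset

/-- **Divided power relations for elementary symmetric functions of square-zero elements.**
Let `R` be a commutative ring and `ε_1, …, ε_n ∈ R` with `ε_i² = 0`.  Put
`Z̄_k = e_k(ε_1,…,ε_n)` (so `Z̄_0 = 1` and `Z̄_k = 0` for `k > n`).  Then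
`Z̄_i · Z̄_j = C(i+j, i) · Z̄_{i+j}` for all `i, j ≥ 0`; in particular `Z̄_i·Z̄_j = 0`
whenever `i + j > n`. -/
theorem esymm_sq_zero_divided_powers {R : Type*} [CommRing R] {n : ℕ}
    (ε : Fin n → R) (hε : ∀ i, ε i ^ 2 = 0)
    (Zbar : ℕ → R)
    (hZbar : ∀ k, Zbar k =
      ∑ I ∈ (Finset.univ.powersetCard k : Finset (Finset (Fin n))), ∏ i ∈ I, ε i) :
    ∀ i j : ℕ, Zbar i * Zbar j = ((i + j).choose i : R) * Zbar (i + j) ∧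
      (n < i + j → Zbar i * Zbar j = 0) := by
  intro i j
  have hdiv : Zbar i * Zbar j = ((i + j).choose i : R) * Zbar (i + j) := by
    simpa only [hZbar] using
      Finset.sum_prod_powersetCard_mul_sum_prod_powersetCard hε Finset.univ i j
  refine ⟨hdiv, fun hn ↦ ?_⟩
  rw [hdiv, hZbar, Finset.powersetCard_eq_empty.mpr (by simpa using hn), Finset.sum_empty,
    mul_zero]
end
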